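/- Let P be a compact subset of the Euclidean plane, and let s, t ∈ P. Then there exists an optimal pair for the min-max quickest pair-visibility problem: a pair (s*, t*) of points of P with segment ℝ s* t* ⊆ P such that for every pair (p, q) of points of P with segment ℝ p q ⊆ P one has max(d_P(s, s*), d_P(t, t*)) ≤ max(d_P(s, p), d_P(t, q)). -/

import Mathlib

open scoped ENNReal

noncomputable abbrev E2 : Type := EuclideanSpace ℝ (Fin 2)

/-- The geodesic (intrinsic) distance in `P`: the infimum of path lengths
(`eVariationOn γ Set.univ`) over continuous paths `γ : [0,1] → E` staying in `P`
from `x` to `y`; `∞` if no such finite-length path exists. -/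
noncomputable def geoDist (P : Set E2) (x y : E2) : ℝ≥0∞ :=
  sInf { l : ℝ≥0∞ | ∃ γ : Set.Icc (0:ℝ) 1 → E2,
    Continuous γ ∧ Set.range γ ⊆ P ∧
    γ ⟨0, by norm_num⟩ = x ∧ γ ⟨1, by norm_num⟩ = y ∧
    eVariationOn γ Set.univ = l }

/-! Arc-length reparametrization turns a path of length `l` into an `l`-Lipschitz path on
`[0, 1]` with the same endpoints and trace. Hence, if `m` is the optimal value, pairs of paths
witnessing values close to `m` can be taken from a set of pairs of `M`-Lipschitz paths in `P`,
with `M` fixed, which is compact by Arzelà–Ascoli; the visibility constraint on the endpoints is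
closed. Length is lower semicontinuous for pointwise convergence, so the larger of the two
lengths attains its minimum on that set, and the endpoints of a minimizing pair are optimal. -/

open Set unitInterval
open scoped NNReal

theorem continuousOn_variationOnFromTo {α E : Type*} [LinearOrder α] [TopologicalSpace α]
    [OrderTopology α] [PseudoMetricSpace E] {f : α → E} {s : Set α}
    (hf : LocallyBoundedVariationOn f s) (hc : ContinuousOn f s) {a : α} (ha : a ∈ s) :
    ContinuousOn (variationOnFromTo f s a) s := by
  intro b hb
  have hleft : ContinuousWithinAt (variationOnFromTo f s a) (s ∩ Iio b) b := by
    have := variationOnFromTo.tendsto_left ha hb hf ((hc b hb).mono inter_subset_left)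
    rwa [dist_self, sub_zero] at this
  have hright : ContinuousWithinAt (variationOnFromTo f s a) (s ∩ Ioi b) b := by
    have := variationOnFromTo.tendsto_right ha hb hf ((hc b hb).mono inter_subset_left)
    rwa [dist_self, add_zero] at this
  refine ((hleft.union continuousWithinAt_singleton).union hright).mono fun x hx => ?_
  rcases lt_trichotomy x b with h | rfl | h
  exacts [Or.inl (Or.inl ⟨hx, h⟩), Or.inl (Or.inr rfl), Or.inr ⟨hx, h⟩]

theorem HasUnitSpeedOn.lipschitzOnWith {E : Type*} [PseudoEMetricSpace E] {f : ℝ → E}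
    {s : Set ℝ} (hf : HasUnitSpeedOn f s) : LipschitzOnWith 1 f s := by
  have key : ∀ x ∈ s, ∀ y ∈ s, x ≤ y → edist (f x) (f y) ≤ 1 * edist x y := by
    intro x hx y hy hxy
    calc edist (f x) (f y) ≤ eVariationOn f (s ∩ Icc x y) :=
          eVariationOn.edist_le f ⟨hx, le_rfl, hxy⟩ ⟨hy, hxy, le_rfl⟩
      _ = 1 * edist x y := by
          rw [hf hx hy, NNReal.coe_one, one_mul, one_mul, edist_comm, edist_dist, Real.dist_eq,
            abs_of_nonneg (sub_nonneg.2 hxy)]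
  intro x hx y hy
  rcases le_total x y with h | h
  · exact key x hx y hy h
  · rw [edist_comm, edist_comm x]; exact key y hy x hx h

theorem image_variationOnFromTo_Icc {E : Type*} [PseudoMetricSpace E] {f : ℝ → E} {a b : ℝ}
    (hab : a ≤ b) (hc : ContinuousOn f (Icc a b)) (hf : BoundedVariationOn f (Icc a b)) :
    variationOnFromTo f (Icc a b) a '' Icc a b = Icc 0 (eVariationOn f (Icc a b)).toReal := by
  have ha : a ∈ Icc a b := left_mem_Icc.2 hab
  rw [(continuousOn_variationOnFromTo hf.locallyBoundedVariationOn hc ha).image_Icc_of_monotoneOn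
    hab (variationOnFromTo.monotoneOn hf.locallyBoundedVariationOn ha),
    variationOnFromTo.self, variationOnFromTo.eq_of_le f _ hab, inter_self]

theorem LipschitzWith.eVariationOn_unitInterval_le {E : Type*} [PseudoEMetricSpace E]
    {f : I → E} {K : ℝ≥0} (hf : LipschitzWith K f) : eVariationOn f univ ≤ K := by
  have hI : univ ∩ Icc (0 : I) 1 = univ := by
    rw [univ_inter]; exact eq_univ_of_forall fun x => ⟨x.2.1, x.2.2⟩
  have hid : eVariationOn (Subtype.val : I → ℝ) univ = 1 := by
    simpa [hI] using
      (show MonotoneOn (Subtype.val : I → ℝ) univ from fun _ _ _ _ h => h).eVariationOn_eq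
        (mem_univ (0 : I)) (mem_univ (1 : I))
  calc eVariationOn f univ = eVariationOn (f ∘ id) univ := rfl
    _ ≤ K * eVariationOn (Subtype.val : I → ℝ) univ :=
      hf.lipschitzOnWith.comp_eVariationOn_le (mapsTo_univ _ _)
    _ = K := by rw [hid, mul_one]

theorem eVariationOn_IccExtend {E : Type*} [PseudoEMetricSpace E] {a b : ℝ} (hab : a ≤ b)
    (f : Icc a b → E) : eVariationOn (IccExtend hab f) (Icc a b) = eVariationOn f univ := by
  have h := eVariationOn.comp_eq_of_monotoneOn (IccExtend hab f) ((↑) : Icc a b → ℝ)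
    (t := univ) fun _ _ _ _ h => h
  rwa [image_univ, Subtype.range_coe, show IccExtend hab f ∘ (↑) = f from
    funext (IccExtend_val hab f), eq_comm] at h

theorem exists_lipschitzWith_reparam {E : Type*} [MetricSpace E] (γ : C(I, E))
    (hγ : BoundedVariationOn γ univ) :
    ∃ g : C(I, E), LipschitzWith (eVariationOn γ univ).toNNReal g ∧ range g ⊆ range γ ∧
      g 0 = γ 0 ∧ g 1 = γ 1 := by
  set f : ℝ → E := IccExtend zero_le_one γ
  have hfγ : ∀ x : I, f x = γ x := IccExtend_val _ _
  have hvar : eVariationOn f (Icc 0 1) = eVariationOn γ univ := eVariationOn_IccExtend _ _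
  have hf : BoundedVariationOn f (Icc 0 1) := by
    rw [BoundedVariationOn, hvar]; exact hγ
  set K := (eVariationOn γ univ).toNNReal
  set v := variationOnFromTo f (Icc 0 1) 0
  have h0 : (0 : ℝ) ∈ Icc 0 1 := left_mem_Icc.2 zero_le_one
  have h1 : (1 : ℝ) ∈ Icc 0 1 := right_mem_Icc.2 zero_le_one
  have himage : v '' Icc 0 1 = Icc 0 (K : ℝ) := by
    rw [image_variationOnFromTo_Icc zero_le_one γ.continuous.Icc_extend'.continuousOn hf, hvar]
    rfl
  have hv1 : v 1 = K := by
    show variationOnFromTo f (Icc 0 1) 0 1 = K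
    rw [variationOnFromTo.eq_of_le f _ zero_le_one, inter_self, hvar]; rfl
  set φ := naturalParameterization f (Icc 0 1) 0
  have hφ : LipschitzOnWith 1 φ (Icc 0 (K : ℝ)) := himage ▸
    (has_unit_speed_naturalParameterization f hf.locallyBoundedVariationOn h0).lipschitzOnWith
  have hφv : ∀ b ∈ Icc (0 : ℝ) 1, φ (v b) = f b := fun b hb =>
    edist_eq_zero.1 (edist_naturalParameterization_eq_zero hf.locallyBoundedVariationOn h0 hb)
  have hmaps : MapsTo (fun t : I => (K : ℝ) * t) univ (Icc 0 K) := fun t _ =>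
    ⟨mul_nonneg K.2 t.2.1, mul_le_of_le_one_right K.2 t.2.2⟩
  have hlip : LipschitzWith K (fun t : I => φ (K * t)) := by
    have := hφ.comp
      ((lipschitzWith_smul (K : ℝ)).comp (LipschitzWith.subtype_val I)).lipschitzOnWith hmaps
    simpa [Function.comp_def] using this
  refine ⟨⟨_, hlip.continuous⟩, hlip, ?_, ?_, ?_⟩
  · rintro _ ⟨t, rfl⟩
    obtain ⟨b, hb, hbt⟩ := himage.symm ▸ hmaps (mem_univ t)
    show φ (K * t) ∈ range γ
    rw [← show v b = K * t from hbt, hφv b hb]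
    exact ⟨_, rfl⟩
  · show φ (K * 0) = γ 0
    rw [mul_zero, ← variationOnFromTo.self f (Icc 0 1) 0, hφv 0 h0]
    exact hfγ 0
  · show φ (K * 1) = γ 1
    rw [mul_one, ← hv1, hφv 1 h1]
    exact hfγ 1

theorem isCompact_setOf_lipschitzWith_forall_mem {X Y : Type*} [PseudoEMetricSpace X]
    [PseudoEMetricSpace Y] {P : Set Y} (hP : IsCompact P) (K : ℝ≥0) :
    IsCompact {f : C(X, Y) | LipschitzWith K f ∧ ∀ x, f x ∈ P} := by
  apply ArzelaAscoli.isCompact_of_equicontinuous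
  · have : ContinuousMap.toFun '' {f : C(X, Y) | LipschitzWith K f ∧ ∀ x, f x ∈ P} =
        {f : X → Y | LipschitzWith K f} ∩ univ.pi fun _ => P := by
      ext f
      constructor
      · rintro ⟨f, hf, rfl⟩
        exact ⟨hf.1, fun x _ => hf.2 x⟩
      · rintro ⟨hf, hfP⟩
        exact ⟨⟨f, hf.continuous⟩, ⟨hf, fun x => hfP x trivial⟩, rfl⟩
    rw [this]
    exact (isCompact_univ_pi fun _ => hP).inter_left (isClosed_setOfPred_lipschitzWith K)
  · exact (LipschitzWith.uniformEquicontinuous _ K fun f => f.2.1).equicontinuous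

theorem isClosed_setOf_segment_subset {E : Type*} [AddCommGroup E] [Module ℝ E]
    [TopologicalSpace E] [ContinuousAdd E] [ContinuousSMul ℝ E] {P : Set E} (hP : IsClosed P) :
    IsClosed {pq : E × E | segment ℝ pq.1 pq.2 ⊆ P} := by
  have : {pq : E × E | segment ℝ pq.1 pq.2 ⊆ P} =
      ⋂ θ ∈ Icc (0 : ℝ) 1, (fun pq : E × E => (1 - θ) • pq.1 + θ • pq.2) ⁻¹' P := by
    ext pq
    simp only [mem_ofPred_eq, segment_eq_image, image_subset_iff, mem_iInter]
    rfl
  rw [this]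
  exact isClosed_biInter fun θ _ => hP.preimage (by fun_prop)

theorem lowerSemicontinuous_eVariationOn {X E : Type*} [LinearOrder X] [TopologicalSpace X]
    [PseudoEMetricSpace E] (s : Set X) :
    LowerSemicontinuous fun f : C(X, E) => eVariationOn f s := fun f _ hv =>
  eVariationOn.lowerSemicontinuous_aux (fun x _ => (continuous_eval_const x).tendsto f) hv

theorem geoDist_le_eVariationOn {P : Set E2} (γ : C(I, E2)) (hγ : range γ ⊆ P) :
    geoDist P (γ 0) (γ 1) ≤ eVariationOn γ univ :=
  sInf_le ⟨γ, γ.continuous, hγ, rfl, rfl, rfl⟩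

theorem exists_lipschitzWith_path_of_geoDist_lt {P : Set E2} {x y : E2} {c : ℝ≥0∞}
    (h : geoDist P x y < c) :
    ∃ K : ℝ≥0, (K : ℝ≥0∞) < c ∧
      ∃ g : C(I, E2), LipschitzWith K g ∧ range g ⊆ P ∧ g 0 = x ∧ g 1 = y := by
  obtain ⟨_, ⟨γ, hγc, hγP, hγ0, hγ1, rfl⟩, hlt⟩ := sInf_lt_iff.1 h
  obtain ⟨g, hg, hgγ, hg0, hg1⟩ := exists_lipschitzWith_reparam ⟨γ, hγc⟩ hlt.ne_top
  exact ⟨_, (ENNReal.coe_toNNReal hlt.ne_top).symm ▸ hlt, g, hg, hgγ.trans hγP,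
    hg0.trans hγ0, hg1.trans hγ1⟩

def lipschitzPathPairs {E : Type*} [PseudoEMetricSpace E] (P : Set E) (V : Set (E × E))
    (s t : E) (M : ℝ≥0) : Set (C(I, E) × C(I, E)) :=
  let S : Set C(I, E) := {g | LipschitzWith M g ∧ ∀ x, g x ∈ P}
  S ×ˢ S ∩ {z | z.1 0 = s ∧ z.2 0 = t ∧ (z.1 1, z.2 1) ∈ V}

theorem isCompact_lipschitzPathPairs {E : Type*} [EMetricSpace E] {P : Set E}
    (hP : IsCompact P) {V : Set (E × E)} (hV : IsClosed V) (s t : E) (M : ℝ≥0) :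
    IsCompact (lipschitzPathPairs P V s t M) := by
  refine ((isCompact_setOf_lipschitzWith_forall_mem hP M).prod
    (isCompact_setOf_lipschitzWith_forall_mem hP M)).inter_right ?_
  exact (isClosed_eq (by fun_prop) continuous_const).inter
    ((isClosed_eq (by fun_prop) continuous_const).inter (hV.preimage (by fun_prop)))

theorem exists_mem_lipschitzPathPairs_of_geoDist_lt {P : Set E2} {V : Set (E2 × E2)}
    {s t p q : E2} {M : ℝ≥0} {c : ℝ≥0∞} (hpq : (p, q) ∈ V) (hcM : c ≤ M)
    (hs : geoDist P s p < c) (ht : geoDist P t q < c) :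
    ∃ z ∈ lipschitzPathPairs P V s t M,
      max (eVariationOn z.1 univ) (eVariationOn z.2 univ) < c := by
  obtain ⟨K₁, hK₁, g₁, hg₁, hg₁P, hg₁0, hg₁1⟩ := exists_lipschitzWith_path_of_geoDist_lt hs
  obtain ⟨K₂, hK₂, g₂, hg₂, hg₂P, hg₂0, hg₂1⟩ := exists_lipschitzWith_path_of_geoDist_lt ht
  have hK₁M : K₁ ≤ M := by exact_mod_cast (hK₁.trans_le hcM).le
  have hK₂M : K₂ ≤ M := by exact_mod_cast (hK₂.trans_le hcM).le
  refine ⟨(g₁, g₂), ⟨⟨⟨hg₁.weaken hK₁M, fun x => hg₁P ⟨x, rfl⟩⟩,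
    ⟨hg₂.weaken hK₂M, fun x => hg₂P ⟨x, rfl⟩⟩⟩, hg₁0, hg₂0, ?_⟩, ?_⟩
  · rw [hg₁1, hg₂1]
    exact hpq
  · exact max_lt (hg₁.eVariationOn_unitInterval_le.trans_lt hK₁)
      (hg₂.eVariationOn_unitInterval_le.trans_lt hK₂)

theorem exists_mem_geoDist_le_of_forall_lt {P : Set E2} (hP : IsCompact P)
    {V : Set (E2 × E2)} (hV : IsClosed V) {s t : E2} {m : ℝ≥0∞} (hm : m ≠ ⊤)
    (h : ∀ c, m < c → ∃ pq ∈ V, geoDist P s pq.1 < c ∧ geoDist P t pq.2 < c) :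
    ∃ pq ∈ V, geoDist P s pq.1 ≤ m ∧ geoDist P t pq.2 ≤ m := by
  -- any finite bound `M > m` on the lengths of the near-optimal paths will do
  set M : ℝ≥0 := m.toNNReal + 1
  have hmM : m < M := by
    rw [ENNReal.coe_add, ENNReal.coe_toNNReal hm]
    exact ENNReal.lt_add_right hm one_ne_zero
  set F := fun z : C(I, E2) × C(I, E2) => max (eVariationOn z.1 univ) (eVariationOn z.2 univ)
  have hnear : ∀ c, m < c → ∃ z ∈ lipschitzPathPairs P V s t M, F z < c := by
    intro c hc
    obtain ⟨⟨p, q⟩, hpq, hs, ht⟩ := h (min c M) (lt_min hc hmM)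
    obtain ⟨z, hz, hFz⟩ := exists_mem_lipschitzPathPairs_of_geoDist_lt hpq (min_le_right _ _) hs ht
    exact ⟨z, hz, hFz.trans_le (min_le_left _ _)⟩
  obtain ⟨z₀, hz₀, -⟩ := hnear _ hmM
  have hF : LowerSemicontinuous F :=
    ((lowerSemicontinuous_eVariationOn univ).comp continuous_fst).sup
      ((lowerSemicontinuous_eVariationOn univ).comp continuous_snd)
  obtain ⟨z, ⟨⟨⟨-, hz₁P⟩, ⟨-, hz₂P⟩⟩, hz₁0, hz₂0, hzV⟩, hzmin⟩ :=
    (hF.lowerSemicontinuousOn _).exists_isMinOn ⟨z₀, hz₀⟩ (isCompact_lipschitzPathPairs hP hV s t M)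
  have hFz : F z ≤ m := le_of_forall_gt fun c hc =>
    let ⟨z', hz', hlt⟩ := hnear c hc
    (hzmin hz').trans_lt hlt
  refine ⟨(z.1 1, z.2 1), hzV, ?_, ?_⟩
  · calc geoDist P s (z.1 1) = geoDist P (z.1 0) (z.1 1) := by rw [hz₁0]
      _ ≤ eVariationOn z.1 univ := geoDist_le_eVariationOn _ (range_subset_iff.2 hz₁P)
      _ ≤ m := (le_max_left _ _).trans hFz
  · calc geoDist P t (z.2 1) = geoDist P (z.2 0) (z.2 1) := by rw [hz₂0]
      _ ≤ eVariationOn z.2 univ := geoDist_le_eVariationOn _ (range_subset_iff.2 hz₂P)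
      _ ≤ m := (le_max_right _ _).trans hFz

theorem minmax_optimal_pair_exists_general (P : Set E2) (hP : IsCompact P)
    (s t : E2) (hs : s ∈ P) :
    ∃ s' t' : E2, s' ∈ P ∧ t' ∈ P ∧ segment ℝ s' t' ⊆ P ∧
      ∀ p q : E2, p ∈ P → q ∈ P → segment ℝ p q ⊆ P →
        max (geoDist P s s') (geoDist P t t') ≤ max (geoDist P s p) (geoDist P t q) := by
  set V := {pq : E2 × E2 | segment ℝ pq.1 pq.2 ⊆ P}
  set m := ⨅ pq ∈ V, max (geoDist P s pq.1) (geoDist P t pq.2)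
  have hm : ∀ p q : E2, segment ℝ p q ⊆ P → m ≤ max (geoDist P s p) (geoDist P t q) :=
    fun p q hpq => iInf₂_le (p, q) hpq
  rcases eq_or_ne m ⊤ with hm_top | hm_fin
  · exact ⟨s, s, hs, hs, by simpa [segment_same],
      fun p q _ _ hpq => (le_top.trans_eq hm_top.symm).trans (hm p q hpq)⟩
  obtain ⟨⟨p, q⟩, hpq, hsp, htq⟩ := exists_mem_geoDist_le_of_forall_lt hP
    (isClosed_setOf_segment_subset hP.isClosed) hm_fin fun c hc => by
      obtain ⟨pq, hlt⟩ := iInf_lt_iff.1 hc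
      obtain ⟨hpq, hlt⟩ := iInf_lt_iff.1 hlt
      exact ⟨pq, hpq, (le_max_left _ _).trans_lt hlt, (le_max_right _ _).trans_lt hlt⟩
  exact ⟨p, q, hpq (left_mem_segment ℝ p q), hpq (right_mem_segment ℝ p q), hpq,
    fun p' q' _ _ hpq' => (max_le hsp htq).trans (hm p' q' hpq')⟩

/-- Existence of a min-max optimal pair for the quickest pair-visibility problem
in a compact planar set. -/
theorem minmax_optimal_pair_exists (P : Set E2) (hP : IsCompact P)
    (s t : E2) (hs : s ∈ P) (ht : t ∈ P) :
    ∃ s' t' : E2, s' ∈ P ∧ t' ∈ P ∧ segment ℝ s' t' ⊆ P ∧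
      ∀ p q : E2, p ∈ P → q ∈ P → segment ℝ p q ⊆ P →
        max (geoDist P s s') (geoDist P t t') ≤ max (geoDist P s p) (geoDist P t q) :=
  minmax_optimal_pair_exists_general P hP s t hs
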